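/- arXiv:0906.4251 — 7 statements merged into one kernel-verified Lean document; each statement's English description precedes it below -/
import Mathlib

section
/- Let r be a natural number and let a : ℕ × ℕ → ℝ be such that for every N, the matrix (a(i,j))_{i,j<N} is symmetric, positive semidefinite, and has rank at most r. Then there exists a sequence of vectors ξ : ℕ → ℝ^r such that a(i,j) = ⟨ξ_i, ξ_j⟩ (Euclidean inner product) for all i, j ∈ ℕ. -/
/-!
Factor a positive semidefinite corner as `Bᴴ * B`: it is then the Gram matrix of the columns
of `B`, which span a space of dimension `rank B = rank M ≤ r`, and an orthonormal basis of that
span places the columns isometrically in `ℝ^r`. To pass to the infinite array, note that any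
representation of a corner satisfies `‖ξ i‖ ^ 2 = a i i`, so extended by `0` it lies in the
compact product `∏ i, closedBall 0 √(a i i)`. The sequences in this product representing the
`N`-th corner thus form a decreasing sequence of nonempty closed sets, and any point of their
intersection represents `a`.
-/

open scoped RealInnerProductSpace

open Module Matrix Metric

section

variable {𝕜 E F : Type*} [RCLike 𝕜] [NormedAddCommGroup E] [InnerProductSpace 𝕜 E]
  [NormedAddCommGroup F] [InnerProductSpace 𝕜 F]

theorem exists_linearIsometry_of_finrank_le [FiniteDimensional 𝕜 E] [FiniteDimensional 𝕜 F]
    (h : finrank 𝕜 E ≤ finrank 𝕜 F) : Nonempty (E →ₗᵢ[𝕜] F) := by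
  let b := stdOrthonormalBasis 𝕜 E
  let c := stdOrthonormalBasis 𝕜 F
  let f : E →ₗ[𝕜] F := b.toBasis.constr 𝕜 (c ∘ Fin.castLE h)
  have hf : Orthonormal 𝕜 (f ∘ b.toBasis) := by
    convert c.orthonormal.comp _ (Fin.castLE_injective h) using 1
    ext i
    simp [f]
  exact ⟨f.isometryOfOrthonormal (b.coe_toBasis ▸ b.orthonormal) hf⟩

theorem exists_gram_eq_of_finrank_span_le [FiniteDimensional 𝕜 F] {n : Type*} [Finite n]
    (w : n → E) (h : finrank 𝕜 (Submodule.span 𝕜 (Set.range w)) ≤ finrank 𝕜 F) :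
    ∃ v : n → F, gram 𝕜 v = gram 𝕜 w := by
  have := FiniteDimensional.span_of_finite 𝕜 (Set.finite_range w)
  obtain ⟨L⟩ := exists_linearIsometry_of_finrank_le h
  refine ⟨fun i => L ⟨w i, Submodule.subset_span (Set.mem_range_self i)⟩, ?_⟩
  ext i j
  simp [gram_apply, L.inner_map_map]

open scoped MatrixOrder ComplexOrder in
theorem Matrix.PosSemidef.exists_eq_gram [FiniteDimensional 𝕜 F] {n : Type*} [Fintype n]
    {M : Matrix n n 𝕜} (hM : M.PosSemidef) (hr : M.rank ≤ finrank 𝕜 F) :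
    ∃ v : n → F, gram 𝕜 v = M := by
  classical
  obtain ⟨B, rfl⟩ := CStarAlgebra.nonneg_iff_eq_star_mul_self.mp hM.nonneg
  let w : n → EuclideanSpace 𝕜 n := fun j => WithLp.toLp 2 (B.col j)
  have hw : gram 𝕜 w = star B * B := gram_eq_conjTranspose_mul (EuclideanSpace.basisFun n 𝕜) w
  have hspan : finrank 𝕜 (Submodule.span 𝕜 (Set.range w)) = B.rank := by
    rw [rank_eq_finrank_span_cols,
      ← LinearEquiv.finrank_map_eq (WithLp.linearEquiv 2 𝕜 (n → 𝕜)).symm, Submodule.map_span,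
      ← Set.range_comp]
    rfl
  rw [← hw]
  refine exists_gram_eq_of_finrank_span_le w ?_
  rwa [hspan, ← rank_conjTranspose_mul_self]

theorem exists_gram_eq_of_forall_fin_submatrix [ProperSpace E] (A : Matrix ℕ ℕ 𝕜)
    (h : ∀ N, ∃ v : Fin N → E, gram 𝕜 v = A.submatrix Fin.val Fin.val) :
    ∃ ξ : ℕ → E, gram 𝕜 ξ = A := by
  choose v hv using h
  let K : Set (ℕ → E) := Set.univ.pi fun i => closedBall 0 √‖A i i‖
  let t (N : ℕ) : Set (ℕ → E) :=
    K ∩ {ξ | ∀ i j, i < N → j < N → inner 𝕜 (ξ i) (ξ j) = A i j}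
  have ht_succ (N : ℕ) : t (N + 1) ⊆ t N :=
    fun ξ hξ => ⟨hξ.1, fun i j hi hj => hξ.2 i j (by omega) (by omega)⟩
  have ht_nonempty (N : ℕ) : (t N).Nonempty := by
    have hvA (i j : Fin N) : inner 𝕜 (v N i) (v N j) = A i j := by
      simpa [gram_apply] using congrFun₂ (hv N) i j
    refine ⟨fun i => if hi : i < N then v N ⟨i, hi⟩ else 0, fun i _ => ?_, fun i j hi hj => ?_⟩
    · by_cases hi : i < N
      · have hAii : ‖A i i‖ = ‖v N ⟨i, hi⟩‖ ^ 2 := by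
          rw [← hvA ⟨i, hi⟩ ⟨i, hi⟩, inner_self_eq_norm_sq_to_K]
          simp
        simp [hi, hAii]
      · simp [hi]
    · simpa [hi, hj] using hvA ⟨i, hi⟩ ⟨j, hj⟩
  have hK : IsCompact K := isCompact_univ_pi fun i => isCompact_closedBall _ _
  have ht_closed (N : ℕ) : IsClosed (t N) := by
    refine (isClosed_set_pi fun i _ => isClosed_closedBall).inter ?_
    simp only [Set.ofPred_forall]
    exact isClosed_iInter fun i => isClosed_iInter fun j => isClosed_iInter fun _ =>
      isClosed_iInter fun _ => isClosed_eq (by fun_prop) continuous_const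
  obtain ⟨ξ, hξ⟩ := IsCompact.nonempty_iInter_of_sequence_nonempty_isCompact_isClosed t ht_succ
    ht_nonempty (hK.of_isClosed_subset (ht_closed 0) Set.inter_subset_left) ht_closed
  exact ⟨ξ, ext fun i j => (Set.mem_iInter.mp hξ (max i j + 1)).2 i j (by omega) (by omega)⟩

end

/-- Every infinite real symmetric array whose finite corner matrices are positive semidefinite
of rank at most `r` admits a Gram representation by a sequence of vectors in `ℝ^r`. -/
theorem stmt4 (r : ℕ) (a : ℕ → ℕ → ℝ)
    (hpsd : ∀ N : ℕ, (Matrix.of fun i j : Fin N => a i j).PosSemidef)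
    (hrank : ∀ N : ℕ, (Matrix.of fun i j : Fin N => a i j).rank ≤ r) :
    ∃ ξ : ℕ → EuclideanSpace ℝ (Fin r), ∀ i j, a i j = ⟪ξ i, ξ j⟫ := by
  have hcorner (N : ℕ) :
      ∃ v : Fin N → EuclideanSpace ℝ (Fin r), gram ℝ v = (of a).submatrix Fin.val Fin.val :=
    (hpsd N).exists_eq_gram (by simpa using hrank N)
  obtain ⟨ξ, hξ⟩ := exists_gram_eq_of_forall_fin_submatrix (of a) hcorner
  exact ⟨ξ, fun i j => (congrFun₂ hξ i j).symm⟩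
end

section
/- Let r be a natural number. Let 𝒮_∞^r denote the set of arrays a : ℕ × ℕ → ℝ such that for every N the matrix (a(i,j))_{i,j<N} is symmetric, positive semidefinite, and of rank at most r, and for a ∈ 𝒮_∞^r let 𝒦_a denote the set of sequences ξ : ℕ → ℝ^r with a(i,j) = ⟨ξ_i, ξ_j⟩ for all i, j. Then: (1) for every a ∈ 𝒮_∞^r, the set 𝒦_a is a nonempty compact subset of (ℝ^r)^ℕ with the product topology; (2) if a sequence (a_n) in 𝒮_∞^r converges pointwise to a (so a ∈ 𝒮_∞^r) and ξ^{(n)} ∈ 𝒦_{a_n} for each n, then the sequence (ξ^{(n)}) has a limit point in (ℝ^r)^ℕ that belongs to 𝒦_a. -/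
/-!
A Gram representation of `a` in `ℝ^r` has `‖ξ i‖ = √(a i i)`, so all representations of arrays
close to `a` lie in a fixed product of closed balls, compact by Tychonoff; a cluster point of
such representations represents the limit array because inner products are continuous. For
nonemptiness, each finite corner of `a ∈ 𝒮_∞^r` is a Gram matrix in `ℝ^r` (factor it as `BᴴB`
and embed the column span of `B`, of dimension `rank a ≤ r`, isometrically into `ℝ^r`).
-/

open scoped RealInnerProductSpace
open Filter Topology Module

/-- The set `𝒮_∞^r` of infinite real symmetric arrays all of whose finite corner matrices are
positive semidefinite of rank at most `r`. -/
def Sinf (r : ℕ) : Set (ℕ → ℕ → ℝ) :=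
  {a | ∀ N : ℕ, (Matrix.of fun i j : Fin N => a i j).PosSemidef ∧
    (Matrix.of fun i j : Fin N => a i j).rank ≤ r}

/-- The set `𝒦_a` of Gram representations of `a` by sequences of vectors in `ℝ^r`. -/
def GramSet (r : ℕ) (a : ℕ → ℕ → ℝ) : Set (ℕ → EuclideanSpace ℝ (Fin r)) :=
  {ξ | ∀ i j, a i j = ⟪ξ i, ξ j⟫}

theorem LinearIsometry.nonempty_of_finrank_le {𝕜 V W : Type*} [RCLike 𝕜]
    [NormedAddCommGroup V] [InnerProductSpace 𝕜 V] [FiniteDimensional 𝕜 V]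
    [NormedAddCommGroup W] [InnerProductSpace 𝕜 W] [FiniteDimensional 𝕜 W]
    (h : finrank 𝕜 V ≤ finrank 𝕜 W) : Nonempty (V →ₗᵢ[𝕜] W) := by
  let b := (stdOrthonormalBasis 𝕜 V).toBasis
  let e : Fin (finrank 𝕜 V) → W := stdOrthonormalBasis 𝕜 W ∘ Fin.castLE h
  have hb : Orthonormal 𝕜 b := by simp [b]
  have he : Orthonormal 𝕜 e :=
    (stdOrthonormalBasis 𝕜 W).orthonormal.comp _ (Fin.castLE_injective h)
  exact ⟨(b.constr 𝕜 e).isometryOfOrthonormal hb (by simpa [Function.comp_def] using he)⟩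

open Matrix MatrixOrder ComplexOrder in
theorem Matrix.PosSemidef.exists_eq_gram_of_rank_le {𝕜 n : Type*} [RCLike 𝕜] [Fintype n]
    [DecidableEq n] {A : Matrix n n 𝕜} (hA : A.PosSemidef) {r : ℕ} (hr : A.rank ≤ r) :
    ∃ v : n → EuclideanSpace 𝕜 (Fin r), A = gram 𝕜 v := by
  obtain ⟨B, rfl⟩ := CStarAlgebra.nonneg_iff_eq_star_mul_self.mp hA.nonneg
  let col : n → EuclideanSpace 𝕜 n := fun i => WithLp.toLp 2 (B.col i)
  have hgram : star B * B = gram 𝕜 col := by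
    ext i j
    simp [col, mul_apply, PiLp.inner_apply, mul_comm]
  have hcol : Set.range col = (WithLp.linearEquiv 2 𝕜 (n → 𝕜)).symm '' Set.range B.col := by
    rw [← Set.range_comp]; rfl
  let V := Submodule.span 𝕜 (Set.range col)
  have hV : finrank 𝕜 V = B.rank := by
    rw [show V = _ from congrArg (Submodule.span 𝕜) hcol, Submodule.span_image_linearEquiv,
      LinearEquiv.finrank_map_eq, rank_eq_finrank_span_cols]
  obtain ⟨L⟩ := LinearIsometry.nonempty_of_finrank_le (𝕜 := 𝕜) (V := V)
      (W := EuclideanSpace 𝕜 (Fin r)) <| by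
    rw [hV, finrank_euclideanSpace_fin, ← rank_conjTranspose_mul_self]; exact hr
  refine ⟨fun i => L ⟨col i, Submodule.subset_span (Set.mem_range_self i)⟩, ?_⟩
  ext i j
  rw [hgram]
  simp

open Matrix in
theorem Matrix.rank_gram_le_finrank {𝕜 E n : Type*} [RCLike 𝕜] [Fintype n]
    [NormedAddCommGroup E] [InnerProductSpace 𝕜 E] [FiniteDimensional 𝕜 E] (v : n → E) :
    (gram 𝕜 v).rank ≤ finrank 𝕜 E := by
  rw [gram_eq_conjTranspose_mul (stdOrthonormalBasis 𝕜 E)]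
  exact (rank_mul_le_right _ _).trans ((rank_le_card_height _).trans_eq (Fintype.card_fin _))

section

variable {ι E : Type*} [NormedAddCommGroup E] [InnerProductSpace ℝ E]

theorem isClosed_setOf_forall_inner_eq (a : ι → ι → ℝ) :
    IsClosed {ξ : ι → E | ∀ i j, a i j = ⟪ξ i, ξ j⟫} := by
  simp only [Set.ofPred_forall]
  exact isClosed_iInter fun i => isClosed_iInter fun j =>
    isClosed_eq continuous_const ((continuous_apply i).inner (continuous_apply j))

theorem isCompact_setOf_forall_inner_eq [ProperSpace E] (a : ι → ι → ℝ) :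
    IsCompact {ξ : ι → E | ∀ i j, a i j = ⟪ξ i, ξ j⟫} := by
  refine (isCompact_univ_pi fun i => isCompact_closedBall (0 : E) √(a i i)).of_isClosed_subset
    (isClosed_setOf_forall_inner_eq a) fun ξ hξ i _ => ?_
  rw [mem_closedBall_zero_iff, hξ i i, real_inner_self_eq_norm_sq, Real.sqrt_sq (norm_nonneg _)]

theorem exists_mapClusterPt_of_tendsto_inner [ProperSpace E] {ξ : ℕ → ι → E} {a : ι → ι → ℝ}
    (h : ∀ i j, Tendsto (fun n => ⟪ξ n i, ξ n j⟫) atTop (𝓝 (a i j))) :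
    ∃ η, (∀ i j, a i j = ⟪η i, η j⟫) ∧ MapClusterPt η atTop ξ := by
  choose C hC using fun i => (h i i).bddAbove_range
  have hbound : ∀ n i, ξ n i ∈ Metric.closedBall 0 √(C i) := fun n i => by
    rw [mem_closedBall_zero_iff, ← Real.sqrt_sq (norm_nonneg _), ← real_inner_self_eq_norm_sq]
    exact Real.sqrt_le_sqrt (hC i ⟨n, rfl⟩)
  obtain ⟨η, -, hη⟩ :=
    (isCompact_univ_pi fun i => isCompact_closedBall (0 : E) √(C i)).exists_mapClusterPt
      (u := ξ) (f := atTop) (tendsto_principal.mpr (.of_forall fun n i _ => hbound n i))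
  refine ⟨η, fun i j => ?_, hη⟩
  have hinner : MapClusterPt ⟪η i, η j⟫ atTop fun n => ⟪ξ n i, ξ n j⟫ :=
    hη.continuousAt_comp ((continuous_apply i).inner (continuous_apply j)).continuousAt
  exact (eq_of_nhds_neBot (ClusterPt.mono hinner (h i j))).symm

end

theorem mem_sinf_of_mem_gramSet {r : ℕ} {a : ℕ → ℕ → ℝ} {ξ : ℕ → EuclideanSpace ℝ (Fin r)}
    (hξ : ξ ∈ GramSet r a) : a ∈ Sinf r := fun N => by
  have hcorner : Matrix.of (fun i j : Fin N => a i j) = Matrix.gram ℝ fun i : Fin N => ξ i :=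
    Matrix.ext fun i j => hξ i j
  rw [hcorner]
  exact ⟨Matrix.posSemidef_gram ℝ _,
    (Matrix.rank_gram_le_finrank _).trans_eq (finrank_euclideanSpace_fin)⟩

theorem gramSet_nonempty {r : ℕ} {a : ℕ → ℕ → ℝ} (ha : a ∈ Sinf r) :
    (GramSet r a).Nonempty := by
  choose v hv using fun N => (ha N).1.exists_eq_gram_of_rank_le (ha N).2
  -- The representations `v N` of the corners need not be compatible, but the zero-padded ones
  -- have eventually correct inner products, so any of their cluster points represents `a`.
  let u : ℕ → ℕ → EuclideanSpace ℝ (Fin r) := fun N i => if h : i < N then v N ⟨i, h⟩ else 0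
  have hu : ∀ i j, ∀ᶠ N in atTop, a i j = ⟪u N i, u N j⟫ := fun i j => by
    filter_upwards [eventually_gt_atTop i, eventually_gt_atTop j] with N hi hj
    simpa [u, hi, hj] using congrFun₂ (hv N) ⟨i, hi⟩ ⟨j, hj⟩
  obtain ⟨η, hη, -⟩ := exists_mapClusterPt_of_tendsto_inner fun i j =>
    tendsto_const_nhds.congr' (hu i j)
  exact ⟨η, hη⟩

/-- (1) For `a ∈ 𝒮_∞^r`, `𝒦_a` is nonempty and compact in the product topology;
(2) if `a_n ∈ 𝒮_∞^r` converge pointwise to `a` and `ξ^{(n)} ∈ 𝒦_{a_n}`, then `a ∈ 𝒮_∞^r` and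
the sequence `(ξ^{(n)})` has a cluster point belonging to `𝒦_a`. -/
theorem stmt5 (r : ℕ) :
    (∀ a ∈ Sinf r, (GramSet r a).Nonempty ∧ IsCompact (GramSet r a)) ∧
    (∀ (a : ℕ → ℕ → ℝ) (as : ℕ → ℕ → ℕ → ℝ) (ξ : ℕ → ℕ → EuclideanSpace ℝ (Fin r)),
      (∀ n, as n ∈ Sinf r) →
      (∀ i j, Tendsto (fun n => as n i j) atTop (𝓝 (a i j))) →
      (∀ n, ξ n ∈ GramSet r (as n)) →
      a ∈ Sinf r ∧ ∃ η ∈ GramSet r a, MapClusterPt η atTop ξ) := by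
  refine ⟨fun a ha => ⟨gramSet_nonempty ha, isCompact_setOf_forall_inner_eq a⟩,
    fun a as ξ _ hconv hξ => ?_⟩
  obtain ⟨η, hη, hcluster⟩ := exists_mapClusterPt_of_tendsto_inner fun i j =>
    (hconv i j).congr fun n => hξ n i j
  exact ⟨mem_sinf_of_mem_gramSet hη, η, hη, hcluster⟩
end

section
/- Let K be a measurable space, p a natural number, and let Z^{i,j} : K → ℝ (i, j ∈ ℕ) be measurable functions such that for every x ∈ K and every N, the matrix (Z^{i,j}(x))_{i,j<N} is symmetric and positive semidefinite of rank at most p. Define p(x) = sup_N rank (Z^{i,j}(x))_{i,j<N} ∈ {0,1,…,p}. Then there exist measurable functions ζ^i : K → ℝ^p (i ∈ ℕ) such that for every x ∈ K and all i, j ∈ ℕ, Z^{i,j}(x) = ⟨ζ^i(x), ζ^j(x)⟩ (Euclidean inner product), and moreover the k-th coordinate of ζ^j(x) vanishes whenever k > p(x). -/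
/-!
The vectors come from a pivoted Cholesky factorisation, run pointwise. At step `k` the pivot is the
least index with a positive diagonal entry in the current residual, and the residual is replaced by
its Schur complement with respect to that entry, which is again positive semidefinite. Rows of
earlier pivots vanish in later residuals, so on the first `k + 1` pivots the factor is triangular
with positive diagonal and some truncation of the Gram matrix has rank at least `k + 1`. A rank
bound `p` therefore exhausts the matrix within `p` steps, and an index `≤ k` kills the `k`-th
coordinate. Each step is a countable combination of measurable operations.
-/

section

variable {K : Type*} [MeasurableSpace K]

lemma measurable_index_apply {β : Type*} [MeasurableSpace β] {f : ℕ → K → β}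
    (hf : ∀ n, Measurable (f n)) {g : K → ℕ} (hg : Measurable g) :
    Measurable fun x => f (g x) x :=
  (measurable_from_prod_countable_left (f := fun q : K × ℕ => f q.2 q.1) hf).comp
    (measurable_id.prodMk hg)

lemma measurable_nat_sInf {p : K → ℕ → Prop} (hp : ∀ n, Measurable fun x => p x n) :
    Measurable fun x => sInf {n | p x n} := by
  refine measurable_to_countable' fun n => ?_
  have key : ∀ x, sInf {n | p x n} = n ↔
      (∀ k < n, ¬ p x k) ∧ (p x n ∨ n = 0 ∧ ∀ k, ¬ p x k) := by
    intro x
    constructor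
    · rintro rfl
      refine ⟨fun k hk => Nat.notMem_of_lt_sInf hk, ?_⟩
      by_cases h : ∃ k, p x k
      · exact Or.inl (Nat.sInf_mem h)
      · push Not at h
        simp [h]
    · rintro ⟨hlt, hn | ⟨rfl, hnone⟩⟩
      · exact le_antisymm (Nat.sInf_le hn) (not_lt.1 fun h => hlt _ h (Nat.sInf_mem ⟨n, hn⟩))
      · simp [hnone]
  simp only [Set.preimage, Set.mem_singleton_iff, key]
  exact measurableSet_setOfPred.2 (by fun_prop)

end

namespace Matrix

variable {n : Type*}

theorem posSemidef_of_forall_finset_submatrix {R : Type*} [Ring R] [PartialOrder R] [StarRing R]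
    {A : Matrix n n R} (h : ∀ s : Finset n, (A.submatrix ((↑) : s → n) (↑)).PosSemidef) :
    A.PosSemidef := by
  classical
  refine ⟨IsHermitian.ext fun i j => ?_, fun x => ?_⟩
  · have hi : i ∈ ({i, j} : Finset n) := by simp
    have hj : j ∈ ({i, j} : Finset n) := by simp
    exact (h {i, j}).isHermitian.apply ⟨i, hi⟩ ⟨j, hj⟩
  · have hx : x = (x.comapDomain ((↑) : x.support → n) Subtype.val_injective.injOn).mapDomain
        (↑) := by
      rw [Finsupp.mapDomain_comapDomain _ Subtype.val_injective]
      intro i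
      simp
    rw [hx]
    simpa [Finsupp.sum_mapDomain_index, add_mul, mul_add] using (h x.support).2 _

def truncate {R : Type*} (A : Matrix ℕ ℕ R) (N : ℕ) : Matrix (Fin N) (Fin N) R :=
  A.submatrix Fin.val Fin.val

theorem posSemidef_of_forall_truncate {R : Type*} [Ring R] [PartialOrder R] [StarRing R]
    {A : Matrix ℕ ℕ R} (h : ∀ N, (A.truncate N).PosSemidef) :
    A.PosSemidef :=
  posSemidef_of_forall_finset_submatrix fun s =>
    (h (s.sup id + 1)).submatrix fun i : s => ⟨i, Nat.lt_succ_of_le (s.le_sup (f := id) i.2)⟩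

theorem exists_rank_submatrix_le_rank_truncate {R ι : Type*} [CommRing R]
    [StrongRankCondition R] [Fintype ι] (A : Matrix ℕ ℕ R) (f : ι → ℕ) :
    ∃ N, (A.submatrix f f).rank ≤ (A.truncate N).rank := by
  set N := Finset.univ.sup f + 1
  let g : ι → Fin N := fun i => ⟨f i, Nat.lt_succ_of_le (Finset.le_sup (Finset.mem_univ i))⟩
  refine ⟨N, ?_⟩
  exact rank_submatrix_le (A.truncate N) g g

lemma PosSemidef.apply_eq_zero_of_diag_eq_zero {A : Matrix n n ℝ} (hA : A.PosSemidef) {i : n}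
    (hi : A i i = 0) (j : n) : A i j = 0 := by
  set B := A.submatrix ![i, j] ![i, j]
  have hB : B.PosSemidef := hA.submatrix _
  have hcol := (hB.dotProduct_mulVec_zero_iff (Pi.single 0 1)).1 (by
    rw [mulVec_single_one, star_trivial, single_one_dotProduct]
    exact hi)
  rw [mulVec_single_one] at hcol
  rw [← hA.isHermitian.apply i j, star_trivial]
  exact congrFun hcol 1

lemma PosSemidef.eq_zero_of_diag_nonpos {A : Matrix n n ℝ} (hA : A.PosSemidef)
    (h : ∀ i, A i i ≤ 0) : A = 0 := by
  ext i j
  exact hA.apply_eq_zero_of_diag_eq_zero ((h i).antisymm hA.diag_nonneg) j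

noncomputable def schurStep (A : Matrix n n ℝ) (m : n) : Matrix n n ℝ :=
  A - (A m m)⁻¹ • vecMulVec (A m) (A m)

lemma schurStep_apply (A : Matrix n n ℝ) (m i j : n) :
    A.schurStep m i j = A i j - (A m m)⁻¹ * (A m i * A m j) := rfl

lemma schurStep_apply_self_self {A : Matrix n n ℝ} {m : n} (h : A m m ≠ 0) :
    A.schurStep m m m = 0 := by
  rw [schurStep_apply, inv_mul_cancel_left₀ h, sub_self]

lemma PosSemidef.schurStep_apply_self_eq_zero {A : Matrix n n ℝ} (hA : A.PosSemidef) (m : n)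
    {i : n} (hi : A i i = 0) : A.schurStep m i i = 0 := by
  have hmi : A m i = 0 := by
    simpa [← hA.isHermitian.apply i m] using hA.apply_eq_zero_of_diag_eq_zero hi m
  simp [schurStep_apply, hi, hmi]

lemma PosSemidef.schurStep_of_fintype [Fintype n] {A : Matrix n n ℝ} (hA : A.PosSemidef)
    (m : n) : (A.schurStep m).PosSemidef := by
  classical
  have hsymm : ∀ i j, A j i = A i j := fun i j => by simpa using hA.isHermitian.apply i j
  refine .of_dotProduct_mulVec_nonneg ?_ fun x => ?_
  · refine hA.isHermitian.sub ?_
    ext i j; simp [vecMulVec, mul_comm]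
  rcases eq_or_ne (A m m) 0 with h0 | h0
  · simpa [schurStep, h0] using hA.dotProduct_mulVec_nonneg x
  set c := (A m ⬝ᵥ x) / A m m
  have hcol : A *ᵥ Pi.single m 1 = A m := by ext i; simp [hsymm]
  -- `x - c • eₘ` satisfies `(A *ᵥ _) m = 0`, and there the two quadratic forms agree
  have key : star x ⬝ᵥ (A.schurStep m *ᵥ x) =
      star (x - c • Pi.single m 1) ⬝ᵥ (A *ᵥ (x - c • Pi.single m 1)) := by
    simp only [schurStep, sub_mulVec, mulVec_sub, dotProduct_sub, sub_dotProduct, mulVec_smul,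
      smul_mulVec, vecMulVec_mulVec, star_trivial, hcol, dotProduct_smul, smul_dotProduct,
      single_one_dotProduct, dotProduct_comm x (A m), smul_eq_mul, op_smul_eq_mul, c]
    change _ = _ - _ * (A m ⬝ᵥ x) - _ * (A m ⬝ᵥ x - _)
    field_simp
    ring
  exact key ▸ hA.dotProduct_mulVec_nonneg _

lemma PosSemidef.schurStep {A : Matrix n n ℝ} (hA : A.PosSemidef) (m : n) :
    (A.schurStep m).PosSemidef := by
  classical
  refine posSemidef_of_forall_finset_submatrix fun s => ?_
  have h := (hA.submatrix ((↑) : ↥(insert m s) → n)).schurStep_of_fintype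
    ⟨m, Finset.mem_insert_self m s⟩
  exact h.submatrix fun i : s => ⟨i, Finset.mem_insert_of_mem i.2⟩

section Pivot

variable (A : Matrix ℕ ℕ ℝ)

-- Without a positive diagonal entry, `sInf ∅ = 0` and `√` of a nonpositive entry is `0`,
-- so `pivotCol` vanishes (`pivotCol_eq_zero`).
noncomputable def pivot : ℕ := sInf {n | 0 < A n n}

noncomputable def pivotCol (j : ℕ) : ℝ := A A.pivot j / √(A A.pivot A.pivot)

variable {A}

lemma pivot_pos (h : ∃ n, 0 < A n n) : 0 < A A.pivot A.pivot := Nat.sInf_mem h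

lemma pivotCol_eq_zero (h : ∀ n, A n n ≤ 0) (j : ℕ) : A.pivotCol j = 0 := by
  simp [pivotCol, Real.sqrt_eq_zero'.2 (h _)]

lemma schurStep_pivot_apply (h : 0 ≤ A A.pivot A.pivot) (i j : ℕ) :
    A.schurStep A.pivot i j = A i j - A.pivotCol i * A.pivotCol j := by
  rw [schurStep_apply, pivotCol, pivotCol, div_mul_div_comm, Real.mul_self_sqrt h,
    inv_mul_eq_div]

end Pivot

noncomputable def cholResidual (A : Matrix ℕ ℕ ℝ) : ℕ → Matrix ℕ ℕ ℝ
  | 0 => A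
  | k + 1 => (cholResidual A k).schurStep (cholResidual A k).pivot

noncomputable def cholFactor (A : Matrix ℕ ℕ ℝ) (k j : ℕ) : ℝ :=
  (A.cholResidual k).pivotCol j

noncomputable def cholPivots (A : Matrix ℕ ℕ ℝ) (k : ℕ) (a : Fin (k + 1)) : ℕ :=
  (A.cholResidual a).pivot

section Cholesky

variable {A : Matrix ℕ ℕ ℝ}

lemma cholResidual_succ (k : ℕ) :
    A.cholResidual (k + 1) = (A.cholResidual k).schurStep (A.cholResidual k).pivot := rfl

lemma cholResidual_eq_zero_of_le {k l : ℕ} (h : A.cholResidual k = 0) (hkl : k ≤ l) :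
    A.cholResidual l = 0 := by
  induction l, hkl using Nat.le_induction with
  | base => exact h
  | succ l _ ih => ext i j; simp [cholResidual_succ, ih, schurStep_apply]

lemma cholFactor_pivot_pos {k : ℕ} (hk : ∃ n, 0 < A.cholResidual k n n) :
    0 < A.cholFactor k (A.cholResidual k).pivot := by
  rw [cholFactor, pivotCol, Real.div_sqrt]
  exact Real.sqrt_pos.2 (pivot_pos hk)

variable (hA : A.PosSemidef)
include hA

lemma PosSemidef.cholResidual (k : ℕ) : (A.cholResidual k).PosSemidef := by
  induction k with
  | zero => exact hA
  | succ k ih => exact ih.schurStep _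

lemma cholResidual_succ_apply (k i j : ℕ) :
    A.cholResidual (k + 1) i j = A.cholResidual k i j - A.cholFactor k i * A.cholFactor k j :=
  schurStep_pivot_apply (hA.cholResidual k).diag_nonneg i j

lemma apply_eq_sum_cholFactor_add_cholResidual (k i j : ℕ) :
    A i j =
      ∑ l ∈ Finset.range k, A.cholFactor l i * A.cholFactor l j + A.cholResidual k i j := by
  induction k with
  | zero => simp [cholResidual]
  | succ k ih => rw [Finset.sum_range_succ, cholResidual_succ_apply hA, ih]; ring

lemma exists_cholResidual_diag_pos_of_le {k l : ℕ} (h : ∃ n, 0 < A.cholResidual l n n)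
    (hkl : k ≤ l) :
    ∃ n, 0 < A.cholResidual k n n := by
  by_contra! hk
  obtain ⟨n, hn⟩ := h
  have h0 := cholResidual_eq_zero_of_le ((hA.cholResidual k).eq_zero_of_diag_nonpos hk) hkl
  simp [h0] at hn

lemma cholResidual_apply_pivot_eq_zero {k l : ℕ} (hk : ∃ n, 0 < A.cholResidual k n n)
    (hkl : k < l) (j : ℕ) : A.cholResidual l (A.cholResidual k).pivot j = 0 := by
  refine (hA.cholResidual l).apply_eq_zero_of_diag_eq_zero ?_ j
  induction l, Nat.succ_le_of_lt hkl using Nat.le_induction with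
  | base => exact schurStep_apply_self_self (pivot_pos hk).ne'
  | succ l hl ih => exact (hA.cholResidual l).schurStep_apply_self_eq_zero _ (ih (by omega))

lemma cholFactor_pivot_eq_zero {k l : ℕ} (hk : ∃ n, 0 < A.cholResidual k n n) (hkl : k < l) :
    A.cholFactor l (A.cholResidual k).pivot = 0 := by
  have h := cholResidual_apply_pivot_eq_zero hA hk hkl (A.cholResidual l).pivot
  rw [← (hA.cholResidual l).isHermitian.apply, star_trivial] at h
  simp [cholFactor, pivotCol, h]

lemma submatrix_cholPivots_eq {k : ℕ} (hk : ∃ n, 0 < A.cholResidual k n n) :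
    A.submatrix (A.cholPivots k) (A.cholPivots k) =
      (of fun (l : Fin (k + 1)) a => A.cholFactor l (A.cholPivots k a))ᵀ *
        of fun (l : Fin (k + 1)) a => A.cholFactor l (A.cholPivots k a) := by
  ext a b
  have ha := exists_cholResidual_diag_pos_of_le hA hk a.is_le
  rw [submatrix_apply, apply_eq_sum_cholFactor_add_cholResidual hA (k + 1), cholPivots,
    cholResidual_apply_pivot_eq_zero hA ha a.is_lt, add_zero, mul_apply,
    ← Fin.sum_univ_eq_sum_range]
  rfl

lemma rank_submatrix_cholPivots {k : ℕ} (hk : ∃ n, 0 < A.cholResidual k n n) :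
    (A.submatrix (A.cholPivots k) (A.cholPivots k)).rank = k + 1 := by
  have hpiv (a : Fin (k + 1)) := exists_cholResidual_diag_pos_of_le hA hk a.is_le
  set V := of fun (l : Fin (k + 1)) a => A.cholFactor l (A.cholPivots k a)
  have hV : V.BlockTriangular id := fun l a hal => cholFactor_pivot_eq_zero hA (hpiv a) hal
  have hdet : V.det ≠ 0 := by
    rw [det_of_isUpperTriangular hV]
    exact Finset.prod_ne_zero_iff.2 fun a _ => (cholFactor_pivot_pos (hpiv a)).ne'
  rw [submatrix_cholPivots_eq hA hk, rank_transpose_mul_self,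
    rank_of_isUnit V ((isUnit_iff_isUnit_det V).2 hdet.isUnit), Fintype.card_fin]

lemma diag_cholResidual_nonpos_of_rank_le {k : ℕ} (h : ∀ N, (A.truncate N).rank ≤ k)
    (n : ℕ) :
    A.cholResidual k n n ≤ 0 := by
  by_contra! hn
  obtain ⟨N, hN⟩ := exists_rank_submatrix_le_rank_truncate A (A.cholPivots k)
  have := (h N).trans' hN
  rw [rank_submatrix_cholPivots hA ⟨n, hn⟩] at this
  omega

lemma cholFactor_eq_zero_of_rank_le {k : ℕ}
    (h : ∀ N, (A.truncate N).rank ≤ k) (j : ℕ) :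
    A.cholFactor k j = 0 :=
  pivotCol_eq_zero (diag_cholResidual_nonpos_of_rank_le hA h) j

lemma apply_eq_sum_cholFactor_of_rank_le {p : ℕ}
    (h : ∀ N, (A.truncate N).rank ≤ p) (i j : ℕ) :
    A i j = ∑ l ∈ Finset.range p, A.cholFactor l i * A.cholFactor l j := by
  rw [apply_eq_sum_cholFactor_add_cholResidual hA p,
    (hA.cholResidual p).eq_zero_of_diag_nonpos (diag_cholResidual_nonpos_of_rank_le hA h),
    zero_apply, add_zero]

end Cholesky

section Measurability

variable {K : Type*} [MeasurableSpace K]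

variable {G : K → Matrix ℕ ℕ ℝ} (hG : ∀ i j, Measurable fun x => G x i j)
include hG

lemma measurable_pivot : Measurable fun x => (G x).pivot :=
  measurable_nat_sInf fun n =>
    measurableSet_setOfPred.1 (measurableSet_lt measurable_const (hG n n))

lemma measurable_cholResidual (k i j : ℕ) : Measurable fun x => (G x).cholResidual k i j := by
  induction k generalizing i j with
  | zero => exact hG i j
  | succ k ih =>
    have hm := measurable_pivot ih
    simp only [cholResidual_succ, schurStep_apply]
    exact (ih i j).sub ((measurable_index_apply (fun n => ih n n) hm).inv.mul
      ((measurable_index_apply (fun n => ih n i) hm).mul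
        (measurable_index_apply (fun n => ih n j) hm)))

lemma measurable_cholFactor (k j : ℕ) : Measurable fun x => (G x).cholFactor k j := by
  have hR := measurable_cholResidual hG k
  have hm := measurable_pivot hR
  exact (measurable_index_apply (fun n => hR n j) hm).div
    (measurable_index_apply (fun n => hR n n) hm).sqrt

end Measurability

end Matrix

open scoped RealInnerProductSpace

/-- Measurable square-root field (Proposition 2.9, 'only if' direction, stated pointwise):
a measurable field of infinite positive semidefinite Gram matrices of rank at most `p` admits
a measurable field of `ℝ^p`-valued vectors realizing it, whose coordinates beyond the pointwise
index vanish. -/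
theorem stmt6 {K : Type*} [MeasurableSpace K] (p : ℕ) (Z : ℕ → ℕ → K → ℝ)
    (hmeas : ∀ i j, Measurable (Z i j))
    (hpsd : ∀ (x : K) (N : ℕ), (Matrix.of fun i j : Fin N => Z i j x).PosSemidef)
    (hrank : ∀ (x : K) (N : ℕ), (Matrix.of fun i j : Fin N => Z i j x).rank ≤ p) :
    ∃ ζ : ℕ → K → EuclideanSpace ℝ (Fin p),
      (∀ i, Measurable (ζ i)) ∧
      (∀ (x : K) (i j : ℕ), Z i j x = ⟪ζ i x, ζ j x⟫) ∧
      (∀ (x : K) (j : ℕ) (k : Fin p),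
        sSup {n : ℕ | ∃ N : ℕ, n = (Matrix.of fun i j : Fin N => Z i j x).rank} ≤ (k : ℕ) →
        ζ j x k = 0) := by
  set G : K → Matrix ℕ ℕ ℝ := fun x => Matrix.of fun i j => Z i j x
  have hG : ∀ x, (G x).PosSemidef := fun x => Matrix.posSemidef_of_forall_truncate (hpsd x)
  refine ⟨fun j x => WithLp.toLp 2 fun k : Fin p => (G x).cholFactor k j, fun j => ?_,
    fun x i j => ?_, fun x j k hk => ?_⟩
  · exact (MeasurableEquiv.toLp 2 _).measurable.comp
      (measurable_pi_lambda _ fun k => Matrix.measurable_cholFactor (fun i j => hmeas i j) k j)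
  · change G x i j = _
    rw [Matrix.apply_eq_sum_cholFactor_of_rank_le (hG x) (hrank x), PiLp.inner_apply,
      ← Fin.sum_univ_eq_sum_range]
    simp [mul_comm]
  · have hbdd : BddAbove {n : ℕ | ∃ N : ℕ, n = ((G x).truncate N).rank} :=
      ⟨p, by rintro _ ⟨N, rfl⟩; exact hrank x N⟩
    exact Matrix.cholFactor_eq_zero_of_rank_le (hG x)
      (fun N => (le_csSup hbdd ⟨N, rfl⟩).trans hk) j
end

section
/- Let ν be a finite measure on a measurable space K, and for each pair i, j ∈ ℕ let γ_{ij} be a finite signed measure on K with γ_{ij} ≪ ν and γ_{ij} = γ_{ji}, such that for every finitely supported a : ℕ → ℝ the signed measure Σ_{i,j} a_i a_j γ_{ij} is nonnegative (i.e., a measure). Then there exist measurable functions Z^{i,j} : K → ℝ such that each Z^{i,j} is a version of the Radon–Nikodym derivative dγ_{ij}/dν, and such that for every x ∈ K (not merely ν-a.e.) the following hold: |Z^{i,j}(x)| ≤ √(Z^{i,i}(x))·√(Z^{j,j}(x)) for all i, j, and for every N the matrix (Z^{i,j}(x))_{i,j<N} is symmetric and positive semidefinite. -/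
/-!
Choose symmetric Radon–Nikodym densities `f i j` of `γ i j`. For a fixed `N` and a rational
vector `a`, the function `∑ a i * a j * f i j` is a density of the nonnegative measure
`∑ a i * a j • γ i j`, hence nonnegative `ν`-a.e. Off a single null set this holds for all
countably many pairs `(N, a)`, so by density of `ℚ` every matrix `(f i j x)_{i,j<N}` is positive
semidefinite there. Setting all densities to `0` on a measurable null set containing the
exceptional points gives versions for which this holds everywhere, and the pointwise
Cauchy–Schwarz inequality is the nonnegativity of the `2 × 2` principal minors.
-/

open MeasureTheory Matrix

namespace Matrix

variable {n : Type*}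

theorem PosSemidef.sq_apply_le {A : Matrix n n ℝ} (hA : A.PosSemidef) (i j : n) :
    A i j ^ 2 ≤ A i i * A j j := by
  have hdet := (hA.submatrix ![i, j]).det_nonneg
  have hji : A j i = A i j := hA.isHermitian.apply i j
  rw [det_fin_two] at hdet
  simp only [submatrix_apply, cons_val_zero, cons_val_one, hji] at hdet
  nlinarith

theorem PosSemidef.abs_apply_le_sqrt_mul_sqrt {A : Matrix n n ℝ} (hA : A.PosSemidef) (i j : n) :
    |A i j| ≤ √(A i i) * √(A j j) := by
  rw [← Real.sqrt_mul hA.diag_nonneg, ← Real.sqrt_sq_eq_abs]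
  exact Real.sqrt_le_sqrt (hA.sq_apply_le i j)

theorem posSemidef_of_forall_rat [Fintype n] {M : Matrix n n ℝ} (hM : M.IsHermitian)
    (h : ∀ a : n → ℚ, 0 ≤ (fun i => (a i : ℝ)) ⬝ᵥ M *ᵥ fun i => (a i : ℝ)) : M.PosSemidef := by
  refine PosSemidef.of_dotProduct_mulVec_nonneg hM fun v => ?_
  have hdense : DenseRange (Pi.map fun _ : n => ((↑) : ℚ → ℝ)) :=
    DenseRange.piMap fun _ => Rat.denseRange_cast
  exact hdense.induction_on (p := fun v => 0 ≤ star v ⬝ᵥ M *ᵥ v) v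
    (isClosed_le continuous_const (by fun_prop)) h

theorem exists_dotProduct_mulVec_eq_sum_range (c : ℕ → ℕ → ℝ) {N : ℕ} (a : Fin N → ℝ) :
    ∃ b : ℕ → ℝ, a ⬝ᵥ of (fun i j : Fin N => c i j) *ᵥ a =
      ∑ i ∈ Finset.range N, ∑ j ∈ Finset.range N, b i * b j * c i j := by
  refine ⟨fun k => if h : k < N then a ⟨k, h⟩ else 0, ?_⟩
  simp only [← Fin.sum_univ_eq_sum_range, Fin.is_lt, dif_pos, Fin.eta, dotProduct, mulVec, of_apply,
    Finset.mul_sum]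
  exact Finset.sum_congr rfl fun i _ => Finset.sum_congr rfl fun j _ => by ring

end Matrix

namespace MeasureTheory

variable {K : Type*} [MeasurableSpace K]

theorem exists_measurable_forall_of_ae {ι β : Type*} [Zero β] [MeasurableSpace β]
    {μ : Measure K} {f : ι → K → β} (hf : ∀ i, Measurable (f i)) {P : (ι → β) → Prop}
    (h0 : P 0) (hP : ∀ᵐ x ∂μ, P fun i => f i x) :
    ∃ g : ι → K → β, (∀ i, Measurable (g i)) ∧ (∀ i, g i =ᵐ[μ] f i) ∧ ∀ x, P fun i => g i x := by
  obtain ⟨s, hs_ae, hs_meas, hs⟩ := hP.exists_measurable_mem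
  refine ⟨fun i => s.indicator (f i), fun i => (hf i).indicator hs_meas,
    fun i => ?_, fun x => ?_⟩
  · filter_upwards [hs_ae] with x hx using Set.indicator_of_mem hx _
  · by_cases hx : x ∈ s
    · simpa only [Set.indicator_of_mem hx] using hs x hx
    · simpa only [Set.indicator_of_notMem hx, Pi.zero_def] using h0

theorem SignedMeasure.apply_eq_setIntegral_rnDeriv {s : SignedMeasure K} {ν : Measure K}
    [SigmaFinite ν] (hs : s ≪ᵥ ν.toENNRealVectorMeasure) {B : Set K} (hB : MeasurableSet B) :
    s B = ∫ x in B, s.rnDeriv ν x ∂ν := by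
  conv_lhs => rw [← (SignedMeasure.absolutelyContinuous_iff_withDensityᵥ_rnDeriv_eq s ν).1 hs]
  exact withDensityᵥ_apply (SignedMeasure.integrable_rnDeriv s ν) hB

theorem SignedMeasure.exists_symm_densities {ι : Type*} [LinearOrder ι] (ν : Measure K)
    [SigmaFinite ν] (γ : ι → ι → SignedMeasure K)
    (hac : ∀ i j, γ i j ≪ᵥ ν.toENNRealVectorMeasure) (hsymm : ∀ i j, γ i j = γ j i) :
    ∃ f : ι → ι → K → ℝ, (∀ i j, Measurable (f i j)) ∧ (∀ i j, Integrable (f i j) ν) ∧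
      (∀ i j, f i j = f j i) ∧
      ∀ i j B, MeasurableSet B → γ i j B = ∫ x in B, f i j x ∂ν := by
  have hγ : ∀ i j, γ (min i j) (max i j) = γ i j := fun i j => by
    rcases le_total i j with h | h
    · rw [min_eq_left h, max_eq_right h]
    · rw [min_eq_right h, max_eq_left h, hsymm]
  refine ⟨fun i j => (γ (min i j) (max i j)).rnDeriv ν, fun _ _ => measurable_rnDeriv _ _,
    fun _ _ => integrable_rnDeriv _ _, fun i j => by simp only [min_comm, max_comm],
    fun i j B hB => ?_⟩
  rw [← hγ i j]
  exact apply_eq_setIntegral_rnDeriv (hac _ _) hB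

theorem integrable_dotProduct_mulVec {n : Type*} [Fintype n] {μ : Measure K}
    {f : n → n → K → ℝ} (hf : ∀ i j, Integrable (f i j) μ) (a : n → ℝ) :
    Integrable (fun x => a ⬝ᵥ of (fun i j => f i j x) *ᵥ a) μ := by
  simp only [dotProduct, mulVec, of_apply]
  exact integrable_finsetSum _ fun i _ =>
    (integrable_finsetSum _ fun j _ => (hf i j).mul_const _).const_mul _

theorem integral_dotProduct_mulVec {n : Type*} [Fintype n] {μ : Measure K}
    {f : n → n → K → ℝ} (hf : ∀ i j, Integrable (f i j) μ) (a : n → ℝ) :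
    ∫ x, a ⬝ᵥ of (fun i j => f i j x) *ᵥ a ∂μ = a ⬝ᵥ of (fun i j => ∫ x, f i j x ∂μ) *ᵥ a := by
  simp only [dotProduct, mulVec, of_apply]
  rw [integral_finsetSum _ fun i _ =>
    (integrable_finsetSum _ fun j _ => (hf i j).mul_const _).const_mul _]
  refine Finset.sum_congr rfl fun i _ => ?_
  rw [integral_const_mul, integral_finsetSum _ fun j _ => (hf i j).mul_const _]
  simp only [integral_mul_const]

theorem ae_nonneg_dotProduct_mulVec_of_density {n : Type*} [Fintype n] {ν : Measure K}
    {γ : n → n → SignedMeasure K} {f : n → n → K → ℝ} (hf_int : ∀ i j, Integrable (f i j) ν)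
    (hf_dens : ∀ i j B, MeasurableSet B → γ i j B = ∫ x in B, f i j x ∂ν) (a : n → ℝ)
    (hpos : ∀ B, MeasurableSet B → 0 ≤ a ⬝ᵥ of (fun i j => γ i j B) *ᵥ a) :
    ∀ᵐ x ∂ν, 0 ≤ a ⬝ᵥ of (fun i j => f i j x) *ᵥ a := by
  refine ae_nonneg_of_forall_setIntegral_nonneg (integrable_dotProduct_mulVec hf_int a)
    fun B hB _ => ?_
  rw [integral_dotProduct_mulVec fun i j => (hf_int i j).restrict]
  simpa only [hf_dens _ _ B hB] using hpos B hB

theorem ae_posSemidef_of_density {n : Type*} [Fintype n] {ν : Measure K}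
    {γ : n → n → SignedMeasure K} {f : n → n → K → ℝ} (hf_int : ∀ i j, Integrable (f i j) ν)
    (hf_symm : ∀ i j, f i j = f j i)
    (hf_dens : ∀ i j B, MeasurableSet B → γ i j B = ∫ x in B, f i j x ∂ν)
    (hpos : ∀ (a : n → ℝ) B, MeasurableSet B → 0 ≤ a ⬝ᵥ of (fun i j => γ i j B) *ᵥ a) :
    ∀ᵐ x ∂ν, (of fun i j => f i j x).PosSemidef := by
  have hrat : ∀ᵐ x ∂ν, ∀ a : n → ℚ,
      0 ≤ (fun i => (a i : ℝ)) ⬝ᵥ of (fun i j => f i j x) *ᵥ fun i => (a i : ℝ) :=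
    ae_all_iff.2 fun a => ae_nonneg_dotProduct_mulVec_of_density hf_int hf_dens _ (hpos _)
  filter_upwards [hrat] with x hx
  exact posSemidef_of_forall_rat (by ext i j; exact congrFun (hf_symm j i) x) hx

end MeasureTheory

/-- Lemma 2.5 of the paper: for a symmetric family of finite signed measures `γ i j ≪ ν` whose
finite quadratic combinations are nonnegative, one can choose versions `Z i j` of the
Radon–Nikodym derivatives `dγ_{ij}/dν` satisfying the Cauchy–Schwarz inequality and positive
semidefiniteness at every point. -/
theorem stmt7 {K : Type*} [MeasurableSpace K] (ν : Measure K) [IsFiniteMeasure ν]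
    (γ : ℕ → ℕ → SignedMeasure K)
    (hac : ∀ (i j : ℕ) (B : Set K), MeasurableSet B → ν B = 0 → γ i j B = 0)
    (hsymm : ∀ i j, γ i j = γ j i)
    (hpos : ∀ (n : ℕ) (a : ℕ → ℝ) (B : Set K), MeasurableSet B →
      0 ≤ ∑ i ∈ Finset.range n, ∑ j ∈ Finset.range n, a i * a j * γ i j B) :
    ∃ Z : ℕ → ℕ → K → ℝ,
      (∀ i j, Measurable (Z i j)) ∧
      (∀ i j, Integrable (Z i j) ν) ∧
      (∀ (i j : ℕ) (B : Set K), MeasurableSet B → γ i j B = ∫ x in B, Z i j x ∂ν) ∧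
      (∀ (x : K) (i j : ℕ), |Z i j x| ≤ Real.sqrt (Z i i x) * Real.sqrt (Z j j x)) ∧
      (∀ (x : K) (N : ℕ), (Matrix.of fun i j : Fin N => Z i j x).PosSemidef) := by
  have hac' : ∀ i j, γ i j ≪ᵥ ν.toENNRealVectorMeasure := fun i j =>
    VectorMeasure.AbsolutelyContinuous.mk fun B hB hνB =>
      hac i j B hB (by rwa [Measure.toENNRealVectorMeasure_apply_measurable hB] at hνB)
  obtain ⟨f, hf_meas, hf_int, hf_symm, hf_dens⟩ :=
    SignedMeasure.exists_symm_densities ν γ hac' hsymm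
  have hf_psd : ∀ᵐ x ∂ν, ∀ N, (of fun i j : Fin N => f i j x).PosSemidef :=
    ae_all_iff.2 fun N => ae_posSemidef_of_density (γ := fun i j : Fin N => γ i j)
      (fun i j => hf_int i j) (fun i j => hf_symm i j) (fun i j => hf_dens i j) fun a B hB => by
        obtain ⟨b, hb⟩ := exists_dotProduct_mulVec_eq_sum_range (γ · · B) a
        exact hb ▸ hpos N b B hB
  obtain ⟨g, hg_meas, hg_ae, hg_psd⟩ := exists_measurable_forall_of_ae
    (f := fun p : ℕ × ℕ => f p.1 p.2)
    (P := fun c => ∀ N, (of fun i j : Fin N => c (i, j)).PosSemidef)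
    (fun _ => hf_meas _ _) (fun _ => PosSemidef.zero) hf_psd
  refine ⟨fun i j => g (i, j), fun i j => hg_meas _,
    fun i j => (hf_int i j).congr (hg_ae (i, j)).symm,
    fun i j B hB => (hf_dens i j B hB).trans <|
      integral_congr_ae (ae_restrict_of_ae (hg_ae (i, j)).symm),
    fun x i j => ?_, hg_psd⟩
  have hN : ∀ k ≤ max i j, k < max i j + 1 := fun _ => Nat.lt_succ_of_le
  exact (hg_psd x _).abs_apply_le_sqrt_mul_sqrt
    ⟨i, hN i (le_max_left i j)⟩ ⟨j, hN j (le_max_right i j)⟩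
end

section
/- Let K be a measurable space and let μ_n, λ_n (n ∈ ℕ), μ, λ be finite measures on K. Suppose there exists a sequence of nonnegative reals ε_n → 0 such that for every measurable set B and every n, (√(μ(B)) − √(μ_n(B)))² ≤ ε_n and (√(λ(B)) − √(λ_n(B)))² ≤ ε_n. Suppose further that there exist measurable sets B_n ⊆ K with μ_n(K ∖ B_n) → 0 and λ_n(B_n) → 0 as n → ∞. Then μ and λ are mutually singular. -/
/-!
The measure `μ ⊓ λ` is dominated by `μ` on `Bₙᶜ` and by `λ` on `Bₙ`, so its total mass is at most
`μ(Bₙᶜ) + λ(Bₙ)`. Both terms tend to zero: `√(μ(Bₙᶜ)) ≤ √(μₙ(Bₙᶜ)) + √εₙ`, and likewise for `λ`.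
Hence `μ ⊓ λ = 0`, i.e. `μ` and `λ` are disjoint in the lattice of measures, which is mutual
singularity.
-/

open MeasureTheory Filter Topology

lemma Real.tendsto_zero_of_sq_sqrt_sub_sqrt_le {ι : Type*} {l : Filter ι} {a b ε : ι → ℝ}
    (ha : ∀ i, 0 ≤ a i) (h : ∀ i, (√(a i) - √(b i)) ^ 2 ≤ ε i)
    (hb : Tendsto b l (𝓝 0)) (hε : Tendsto ε l (𝓝 0)) :
    Tendsto a l (𝓝 0) := by
  have hsqrt_le : ∀ i, √(a i) ≤ √(b i) + √(ε i) := fun i => by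
    have := Real.sqrt_le_sqrt (h i)
    rw [Real.sqrt_sq_eq_abs] at this
    linarith [le_abs_self (√(a i) - √(b i))]
  have hbound : Tendsto (fun i => √(b i) + √(ε i)) l (𝓝 0) := by
    simpa using hb.sqrt.add hε.sqrt
  have hsqrt : Tendsto (fun i => √(a i)) l (𝓝 0) :=
    squeeze_zero (fun i => Real.sqrt_nonneg _) hsqrt_le hbound
  simpa [Real.sq_sqrt (ha _)] using hsqrt.pow 2

namespace MeasureTheory

variable {α ι : Type*} [MeasurableSpace α] {l : Filter ι}

lemma tendsto_measure_zero_of_sq_sqrt_sub_sqrt_le {ν : Measure α} [IsFiniteMeasure ν]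
    {νs : ι → Measure α} {s : ι → Set α} {ε : ι → ℝ}
    (h : ∀ i, (√(ν (s i)).toReal - √(νs i (s i)).toReal) ^ 2 ≤ ε i)
    (hε : Tendsto ε l (𝓝 0)) (hνs : Tendsto (fun i => (νs i (s i)).toReal) l (𝓝 0)) :
    Tendsto (fun i => ν (s i)) l (𝓝 0) :=
  (ENNReal.tendsto_toReal_zero_iff fun _ => measure_ne_top _ _).1 <|
    Real.tendsto_zero_of_sq_sqrt_sub_sqrt_le (fun _ => ENNReal.toReal_nonneg) h hνs hε

lemma Measure.inf_apply_univ_le_measure_compl_add (μ ν : Measure α) (s : Set α) :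
    (μ ⊓ ν) Set.univ ≤ μ sᶜ + ν s :=
  calc (μ ⊓ ν) Set.univ ≤ (μ ⊓ ν) s + (μ ⊓ ν) sᶜ := measure_univ_le_add_compl s
    _ ≤ ν s + μ sᶜ :=
      add_le_add (Measure.le_iff'.1 inf_le_right s) (Measure.le_iff'.1 inf_le_left sᶜ)
    _ = μ sᶜ + ν s := add_comm _ _

lemma Measure.MutuallySingular.of_tendsto [l.NeBot] {μ ν : Measure α} {s : ι → Set α}
    (hμ : Tendsto (fun i => μ (s i)ᶜ) l (𝓝 0)) (hν : Tendsto (fun i => ν (s i)) l (𝓝 0)) :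
    μ ⟂ₘ ν := by
  refine Measure.mutuallySingular_of_disjoint <| disjoint_iff.2 <| Measure.measure_univ_eq_zero.1 ?_
  have hsum : Tendsto (fun i => μ (s i)ᶜ + ν (s i)) l (𝓝 0) := by simpa using hμ.add hν
  exact nonpos_iff_eq_zero.1 <|
    ge_of_tendsto hsum (.of_forall fun i => inf_apply_univ_le_measure_compl_add μ ν (s i))

end MeasureTheory

theorem stmt16_general {K : Type*} [MeasurableSpace K]
    (μs lams : ℕ → Measure K) (μ lam : Measure K)
    [IsFiniteMeasure μ] [IsFiniteMeasure lam]
    (ε : ℕ → ℝ) (hεlim : Tendsto ε atTop (𝓝 0))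
    (hμ : ∀ (n : ℕ) (B : Set K), MeasurableSet B →
      (Real.sqrt (μ B).toReal - Real.sqrt (μs n B).toReal) ^ 2 ≤ ε n)
    (hlam : ∀ (n : ℕ) (B : Set K), MeasurableSet B →
      (Real.sqrt (lam B).toReal - Real.sqrt (lams n B).toReal) ^ 2 ≤ ε n)
    (Bs : ℕ → Set K) (hBmeas : ∀ n, MeasurableSet (Bs n))
    (h1 : Tendsto (fun n => (μs n (Bs n)ᶜ).toReal) atTop (𝓝 0))
    (h2 : Tendsto (fun n => (lams n (Bs n)).toReal) atTop (𝓝 0)) :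
    Measure.MutuallySingular μ lam :=
  Measure.MutuallySingular.of_tendsto
    (tendsto_measure_zero_of_sq_sqrt_sub_sqrt_le (fun n => hμ n _ (hBmeas n).compl) hεlim h1)
    (tendsto_measure_zero_of_sq_sqrt_sub_sqrt_le (fun n => hlam n _ (hBmeas n)) hεlim h2)

/-- Abstract content of Lemma 5.6: if `μ_n` approximates `μ` and `λ_n` approximates `λ`
uniformly over measurable sets in the square-root sense with error `ε_n → 0`, and there are
measurable sets `B_n` with `μ_n(K ∖ B_n) → 0` and `λ_n(B_n) → 0`, then `μ ⟂ λ`. -/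
theorem stmt16 {K : Type*} [MeasurableSpace K]
    (μs lams : ℕ → Measure K) (μ lam : Measure K)
    [∀ n, IsFiniteMeasure (μs n)] [∀ n, IsFiniteMeasure (lams n)]
    [IsFiniteMeasure μ] [IsFiniteMeasure lam]
    (ε : ℕ → ℝ) (hε0 : ∀ n, 0 ≤ ε n) (hεlim : Tendsto ε atTop (𝓝 0))
    (hμ : ∀ (n : ℕ) (B : Set K), MeasurableSet B →
      (Real.sqrt (μ B).toReal - Real.sqrt (μs n B).toReal) ^ 2 ≤ ε n)
    (hlam : ∀ (n : ℕ) (B : Set K), MeasurableSet B →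
      (Real.sqrt (lam B).toReal - Real.sqrt (lams n B).toReal) ^ 2 ≤ ε n)
    (Bs : ℕ → Set K) (hBmeas : ∀ n, MeasurableSet (Bs n))
    (h1 : Tendsto (fun n => (μs n (Bs n)ᶜ).toReal) atTop (𝓝 0))
    (h2 : Tendsto (fun n => (lams n (Bs n)).toReal) atTop (𝓝 0)) :
    Measure.MutuallySingular μ lam :=
  stmt16_general μs lams μ lam ε hεlim hμ hlam Bs hBmeas h1 h2
end

section
/- Let K be a measurable space, p ≥ 1 a natural number, and Z^{i,j} : K → ℝ (i, j ∈ ℕ) measurable functions such that for every x ∈ K: Z^{i,j}(x) = Z^{j,i}(x) for all i, j; for every N the matrix (Z^{i,j}(x))_{i,j<N} is positive semidefinite; and p(x) := sup_N rank (Z^{i,j}(x))_{i,j<N} ≤ p. For u, v finitely supported real sequences write ⟨u, v⟩_{Z(x)} := Σ_{i,j} Z^{i,j}(x) u_i v_j. Then there exist functions g^{(1)}, …, g^{(p)} from K to the space of finitely supported real sequences, with each coordinate function x ↦ g^{(k)}_i(x) measurable, such that for every x ∈ K: ⟨g^{(k)}(x), g^{(l)}(x)⟩_{Z(x)} = 0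 whenever k ≠ l, and ⟨g^{(k)}(x), g^{(k)}(x)⟩_{Z(x)} = 1 if k ≤ p(x) and = 0 if k > p(x). -/
/-- The pre-inner product `⟨u, v⟩_{Z(x)} = Σ_{i,j} Z^{i,j}(x) u_i v_j` on finitely supported
real sequences. -/
noncomputable def innerZ {K : Type*} (Z : ℕ → ℕ → K → ℝ) (x : K) (u v : ℕ →₀ ℝ) : ℝ :=
  ∑ i ∈ u.support, ∑ j ∈ v.support, Z i j x * u i * v j

/-!
Read `Z(x)` as a positive semidefinite symmetric bilinear form on `ℕ →₀ ℝ` and run Gram–Schmidt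
on the standard basis, subtracting no component along the null vectors it produces; a null vector
is orthogonal to everything by Cauchy–Schwarz, so the output is still an orthogonal family. The
change of basis is unitriangular, so the rank of the `N × N` section of `Z(x)` is the number of
non-null vectors among the first `N`, and normalising the `k`-th non-null vector gives
`g^{(k)}(x)`. Each step is a finite arithmetic expression in the `Z^{i,j}(x)` or a countable case
distinction, hence measurable in `x`.
-/

open Finset Matrix

theorem Nat.exists_lt_count_iff {p : ℕ → Prop} [DecidablePred p] {k : ℕ} :
    (∃ n, k < Nat.count p n) ↔ ∃ m, p m ∧ Nat.count p m = k := by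
  refine ⟨fun ⟨n, hn⟩ => ?_, fun ⟨m, hm, hcount⟩ =>
    ⟨m + 1, by simp [Nat.count_succ, hm, hcount]⟩⟩
  induction n with
  | zero => simp at hn
  | succ n ih =>
    by_cases hk : k < Nat.count p n
    · exact ih hk
    · rw [Nat.count_succ] at hn
      split_ifs at hn with hpn
      · exact ⟨n, hpn, by omega⟩
      · omega

theorem measurable_nat_count {α : Type*} [MeasurableSpace α] {p : ℕ → α → Prop} [∀ x, DecidablePred (p · x)]
    (hp : ∀ n, MeasurableSet {x | p n x}) (N : ℕ) :
    Measurable fun x => Nat.count (p · x) N := by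
  induction N with
  | zero => simp
  | succ N ih =>
    simp_rw [Nat.count_succ]
    exact ih.add (Measurable.ite (hp N) measurable_const measurable_const)

theorem Measurable.dite_find {α β : Type*} [MeasurableSpace α] [MeasurableSpace β]
    {p : ℕ → α → Prop} [∀ n, DecidablePred (p n)] [∀ x, Decidable (∃ n, p n x)]
    {f : ℕ → α → β} {g : α → β}
    (hf : ∀ n, Measurable (f n)) (hg : Measurable g) (hp : ∀ n, MeasurableSet {x | p n x}) :
    Measurable fun x => if h : ∃ n, p n x then f (Nat.find h) x else g x := by
  have hs : MeasurableSet {x | ∃ n, p n x} := by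
    simpa only [Set.ofPred_exists] using MeasurableSet.iUnion hp
  exact Measurable.dite (s := {x | ∃ n, p n x})
    (Measurable.find (fun n => (hf n).comp measurable_subtype_coe)
      (fun n => measurable_subtype_coe (hp n)) fun x => x.2)
    (hg.comp measurable_subtype_coe) hs

noncomputable def gramForm (A : ℕ → ℕ → ℝ) : LinearMap.BilinForm ℝ (ℕ →₀ ℝ) :=
  Finsupp.linearCombination ℝ fun i => Finsupp.linearCombination ℝ (A i)

theorem gramForm_apply_eq_sum (A : ℕ → ℕ → ℝ) {u v : ℕ →₀ ℝ} {s t : Finset ℕ}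
    (hu : u.support ⊆ s) (hv : v.support ⊆ t) :
    gramForm A u v = ∑ i ∈ s, ∑ j ∈ t, A i j * u i * v j := by
  simp only [gramForm, Finsupp.linearCombination_apply, Finsupp.sum, LinearMap.coe_sum,
    LinearMap.coe_smul, Finset.sum_apply, Pi.smul_apply, smul_eq_mul, mul_sum]
  refine sum_subset hu (fun i _ hi => ?_) |>.trans (sum_congr rfl fun i _ => ?_)
  · simp [Finsupp.notMem_support_iff.mp hi]
  · refine sum_subset hv (fun j _ hj => ?_) |>.trans (sum_congr rfl fun j _ => ?_)
    · simp [Finsupp.notMem_support_iff.mp hj]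
    · ring

theorem innerZ_eq_gramForm {K : Type*} (Z : ℕ → ℕ → K → ℝ) (x : K) (u v : ℕ →₀ ℝ) :
    innerZ Z x u v = gramForm (fun i j => Z i j x) u v :=
  (gramForm_apply_eq_sum _ subset_rfl subset_rfl).symm

theorem gramForm_isSymm {A : ℕ → ℕ → ℝ} (hA : ∀ i j, A i j = A j i) :
    (gramForm A).IsSymm := by
  refine ⟨fun u v => ?_⟩
  have hu : u.support ⊆ u.support ∪ v.support := subset_union_left
  have hv : v.support ⊆ u.support ∪ v.support := subset_union_right
  rw [gramForm_apply_eq_sum A hu hv, gramForm_apply_eq_sum A hv hu, sum_comm]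
  exact sum_congr rfl fun i _ => sum_congr rfl fun j _ => by rw [hA]; ring

theorem gramForm_apply_eq_dotProduct (A : ℕ → ℕ → ℝ) {N : ℕ} {u v : ℕ →₀ ℝ}
    (hu : u.support ⊆ range N) (hv : v.support ⊆ range N) :
    gramForm A u v =
      (fun i : Fin N => u i) ⬝ᵥ (Matrix.of fun i j : Fin N => A i j) *ᵥ fun j => v j := by
  rw [gramForm_apply_eq_sum A hu hv]
  simp only [dotProduct, mulVec, of_apply, mul_sum]
  rw [← Fin.sum_univ_eq_sum_range]
  refine sum_congr rfl fun i _ => ?_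
  rw [← Fin.sum_univ_eq_sum_range (fun j => A i j * u i * v j)]
  exact sum_congr rfl fun j _ => by ring

theorem gramForm_self_nonneg {A : ℕ → ℕ → ℝ}
    (hA : ∀ N, (Matrix.of fun i j : Fin N => A i j).PosSemidef) (u : ℕ →₀ ℝ) :
    0 ≤ gramForm A u u := by
  obtain ⟨N, hN⟩ := u.support.exists_nat_subset_range
  rw [gramForm_apply_eq_dotProduct A hN hN]
  simpa using (hA N).dotProduct_mulVec_nonneg fun i : Fin N => u i

namespace LinearMap.BilinForm

variable {M : Type*} [AddCommGroup M] [Module ℝ M]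

/-- When `gramSchmidt B v j` is null, its coefficient is `_ / 0 = 0`: nothing is subtracted. -/
noncomputable def gramSchmidt (B : LinearMap.BilinForm ℝ M) (v : ℕ → M) : ℕ → M
  | n => v n - ∑ j : Fin n,
      (B (v n) (gramSchmidt B v j) / B (gramSchmidt B v j) (gramSchmidt B v j)) •
        gramSchmidt B v j

theorem gramSchmidt_def (B : LinearMap.BilinForm ℝ M) (v : ℕ → M) (n : ℕ) :
    B.gramSchmidt v n = v n - ∑ j : Fin n,
      (B (v n) (B.gramSchmidt v j) / B (B.gramSchmidt v j) (B.gramSchmidt v j)) •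
        B.gramSchmidt v j := by
  rw [gramSchmidt]

noncomputable def gramSchmidtRank (B : LinearMap.BilinForm ℝ M) (v : ℕ → M) (N : ℕ) : ℕ :=
  Nat.count (fun m => B (B.gramSchmidt v m) (B.gramSchmidt v m) ≠ 0) N

def IsKthNonnull (B : LinearMap.BilinForm ℝ M) (v : ℕ → M) (k m : ℕ) : Prop :=
  B (B.gramSchmidt v m) (B.gramSchmidt v m) ≠ 0 ∧ B.gramSchmidtRank v m = k

open Classical in
noncomputable def gramSchmidtNormed (B : LinearMap.BilinForm ℝ M) (v : ℕ → M) (k : ℕ) : M :=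
  if h : ∃ m, B.IsKthNonnull v k m then
    (√(B (B.gramSchmidt v (Nat.find h)) (B.gramSchmidt v (Nat.find h))))⁻¹ •
      B.gramSchmidt v (Nat.find h)
  else 0

section Orthogonality

variable {B : LinearMap.BilinForm ℝ M} (hB : B.IsSymm) (hs : ∀ u, 0 ≤ B u u) (v : ℕ → M)
include hB hs

theorem gramSchmidt_orthogonal_of_lt {i j : ℕ} (hji : j < i) :
    B (B.gramSchmidt v i) (B.gramSchmidt v j) = 0 := by
  induction i using Nat.strong_induction_on generalizing j with
  | _ i ih =>
    have hother (k : Fin i) (hk : k ≠ ⟨j, hji⟩) :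
        B (B.gramSchmidt v k) (B.gramSchmidt v j) = 0 := by
      rcases (Fin.val_ne_of_ne hk).lt_or_gt with h | h
      · rw [hB.eq, ih j hji h]
      · exact ih k k.2 h
    have hnull (h : B (B.gramSchmidt v j) (B.gramSchmidt v j) = 0) :
        B (v i) (B.gramSchmidt v j) = 0 := by
      rw [hB.eq, mem_ker.mp ((B.apply_apply_same_eq_zero_iff hs (isSymm_iff.mp hB)).mp h)]
      rfl
    rw [gramSchmidt_def]
    simp only [map_sub, map_sum, map_smul, LinearMap.sub_apply, LinearMap.coe_sum,
      Finset.sum_apply, LinearMap.smul_apply, smul_eq_mul]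
    rw [sum_eq_single_of_mem _ (mem_univ _) fun k _ hk => by rw [hother k hk, mul_zero],
      div_mul_cancel_of_imp hnull, sub_self]

theorem gramSchmidt_orthogonal {i j : ℕ} (hij : i ≠ j) :
    B (B.gramSchmidt v i) (B.gramSchmidt v j) = 0 := by
  rcases hij.lt_or_gt with h | h
  · rw [hB.eq, gramSchmidt_orthogonal_of_lt hB hs v h]
  · exact gramSchmidt_orthogonal_of_lt hB hs v h

open Classical in
theorem gramSchmidtNormed_orthogonal {k l : ℕ} (hkl : k ≠ l) :
    B (B.gramSchmidtNormed v k) (B.gramSchmidtNormed v l) = 0 := by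
  unfold gramSchmidtNormed
  split_ifs with hk hl hl
  · have hne : Nat.find hk ≠ Nat.find hl := fun h =>
      hkl ((Nat.find_spec hk).2.symm.trans (h ▸ (Nat.find_spec hl).2))
    simp [gramSchmidt_orthogonal hB hs v hne]
  all_goals simp

end Orthogonality

open Classical in
theorem gramSchmidtNormed_self {B : LinearMap.BilinForm ℝ M} (hs : ∀ u, 0 ≤ B u u)
    (v : ℕ → M) (k : ℕ) :
    B (B.gramSchmidtNormed v k) (B.gramSchmidtNormed v k) =
      if ∃ N, k < B.gramSchmidtRank v N then 1 else 0 := by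
  have hiff : (∃ N, k < B.gramSchmidtRank v N) ↔ ∃ m, B.IsKthNonnull v k m :=
    Nat.exists_lt_count_iff
  unfold gramSchmidtNormed
  simp only [hiff]
  split_ifs with h
  · have hpos := (hs _).lt_of_ne' (Nat.find_spec h).1
    simp only [map_smul, smul_apply, smul_eq_mul]
    rw [← mul_assoc, ← mul_inv, Real.mul_self_sqrt hpos.le, inv_mul_cancel₀ hpos.ne']
  · simp

theorem support_gramSchmidt_single_subset (B : LinearMap.BilinForm ℝ (ℕ →₀ ℝ)) (n : ℕ) :
    (B.gramSchmidt (Finsupp.single · 1) n).support ⊆ Finset.range (n + 1) := by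
  induction n using Nat.strong_induction_on with
  | _ n ih =>
    rw [gramSchmidt_def]
    refine Finsupp.support_sub.trans (union_subset ?_ ?_)
    · exact Finsupp.support_single_subset.trans (singleton_subset_iff.mpr (self_mem_range_succ n))
    · refine Finsupp.support_finsetSum.trans (biUnion_subset.mpr fun j _ => ?_)
      exact Finsupp.support_smul.trans
        ((ih j j.2).trans (Finset.range_subset_range.mpr (Nat.succ_le_succ j.2.le)))

theorem gramSchmidt_single_apply_of_lt (B : LinearMap.BilinForm ℝ (ℕ →₀ ℝ)) {n i : ℕ}
    (h : n < i) : B.gramSchmidt (Finsupp.single · 1) n i = 0 :=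
  Finsupp.notMem_support_iff.mp fun hi =>
    (Finset.mem_range.mp (support_gramSchmidt_single_subset B n hi)).not_ge h

theorem gramSchmidt_single_apply_self (B : LinearMap.BilinForm ℝ (ℕ →₀ ℝ)) (n : ℕ) :
    B.gramSchmidt (Finsupp.single · 1) n n = 1 := by
  rw [gramSchmidt_def, Finsupp.sub_apply, Finsupp.finsetSum_apply,
    sum_eq_zero fun j _ => by rw [Finsupp.smul_apply, gramSchmidt_single_apply_of_lt B j.2,
      smul_zero], Finsupp.single_eq_same, sub_zero]

end LinearMap.BilinForm

open LinearMap.BilinForm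

theorem rank_gramMatrix_eq_gramSchmidtRank {A : ℕ → ℕ → ℝ} (hA : ∀ i j, A i j = A j i)
    (hpsd : ∀ N, (Matrix.of fun i j : Fin N => A i j).PosSemidef) (N : ℕ) :
    (Matrix.of fun i j : Fin N => A i j).rank =
      (gramForm A).gramSchmidtRank (Finsupp.single · 1) N := by
  set g := (gramForm A).gramSchmidt (Finsupp.single · 1)
  set T : Matrix (Fin N) (Fin N) ℝ := Matrix.of fun i j => g i j
  have hT : IsUnit T.det := by
    have hlower : T.IsLowerTriangular := fun i j hij =>
      gramSchmidt_single_apply_of_lt _ (show (i : ℕ) < j from hij)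
    simp [det_of_isLowerTriangular T hlower, T, g, gramSchmidt_single_apply_self]
  have hsupp (i : Fin N) : (g i).support ⊆ range N :=
    (support_gramSchmidt_single_subset _ i).trans (range_subset_range.mpr i.2)
  have hdiag : T * Matrix.of (fun i j : Fin N => A i j) * Tᵀ =
      diagonal fun i : Fin N => gramForm A (g i) (g i) := by
    ext i j
    rw [mul_mul_apply, transpose_transpose]
    change (fun k : Fin N => g i k) ⬝ᵥ _ *ᵥ (fun k : Fin N => g j k) = _
    rw [← gramForm_apply_eq_dotProduct A (hsupp i) (hsupp j)]
    by_cases h : i = j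
    · rw [h, diagonal_apply_eq]
    · rw [diagonal_apply_ne _ h, gramSchmidt_orthogonal (gramForm_isSymm hA)
        (gramForm_self_nonneg hpsd) _ (Fin.val_ne_of_ne h)]
  rw [← rank_mul_eq_right_of_isUnit_det T _ hT, ← rank_mul_eq_left_of_isUnit_det Tᵀ _
    (by rwa [det_transpose]), hdiag, rank_diagonal, gramSchmidtRank,
    Nat.count_eq_card_filter_range, Fintype.card_subtype, card_filter, card_filter,
    Fin.sum_univ_eq_sum_range (fun i => if gramForm A (g i) (g i) ≠ 0 then 1 else 0)]

section Measurability

variable {K : Type*} [MeasurableSpace K] {A : K → ℕ → ℕ → ℝ}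
  (hA : ∀ i j, Measurable fun x => A x i j)
include hA

theorem measurable_gramForm_apply {u v : K → ℕ →₀ ℝ} {s t : Finset ℕ}
    (hus : ∀ x, (u x).support ⊆ s) (hvt : ∀ x, (v x).support ⊆ t)
    (hu : ∀ i, Measurable fun x => u x i) (hv : ∀ j, Measurable fun x => v x j) :
    Measurable fun x => gramForm (A x) (u x) (v x) := by
  simp_rw [fun x => gramForm_apply_eq_sum (A x) (hus x) (hvt x)]
  exact Finset.measurable_sum _ fun i _ => Finset.measurable_sum _ fun j _ =>
    ((hA i j).mul (hu i)).mul (hv j)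

theorem measurable_gramSchmidt_single_apply (n i : ℕ) :
    Measurable fun x => (gramForm (A x)).gramSchmidt (Finsupp.single · 1) n i := by
  induction n using Nat.strong_induction_on generalizing i with
  | _ n ih =>
    have hsupp (m : ℕ) (x : K) := support_gramSchmidt_single_subset (gramForm (A x)) m
    simp_rw [gramSchmidt_def _ _ n, Finsupp.sub_apply, Finsupp.finsetSum_apply,
      Finsupp.smul_apply, smul_eq_mul]
    refine measurable_const.sub (Finset.measurable_sum _ fun j _ => ?_)
    refine (Measurable.div ?_ ?_).mul (ih j j.2 i)
    · exact measurable_gramForm_apply hA (fun _ => Finsupp.support_single_subset)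
        (hsupp j) (fun _ => measurable_const) (ih j j.2)
    · exact measurable_gramForm_apply hA (hsupp j) (hsupp j) (ih j j.2) (ih j j.2)

theorem measurable_gramForm_gramSchmidt_single_self (n : ℕ) :
    Measurable fun x => gramForm (A x) ((gramForm (A x)).gramSchmidt (Finsupp.single · 1) n)
      ((gramForm (A x)).gramSchmidt (Finsupp.single · 1) n) :=
  measurable_gramForm_apply hA (fun _ => support_gramSchmidt_single_subset _ n)
    (fun _ => support_gramSchmidt_single_subset _ n)
    (measurable_gramSchmidt_single_apply hA n) (measurable_gramSchmidt_single_apply hA n)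

open Classical in
theorem measurable_gramSchmidtNormed_single_apply (k i : ℕ) :
    Measurable fun x => (gramForm (A x)).gramSchmidtNormed (Finsupp.single · 1) k i := by
  have hnonnull (m : ℕ) : MeasurableSet {x | gramForm (A x)
      ((gramForm (A x)).gramSchmidt (Finsupp.single · 1) m)
      ((gramForm (A x)).gramSchmidt (Finsupp.single · 1) m) ≠ 0} :=
    (measurableSet_singleton 0).compl.preimage (measurable_gramForm_gramSchmidt_single_self hA m)
  simp only [gramSchmidtNormed, apply_dite (fun u : ℕ →₀ ℝ => u i), Finsupp.smul_apply,
    smul_eq_mul, Finsupp.coe_zero, Pi.zero_apply]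
  refine Measurable.dite_find (β := ℝ)
    (p := fun m x => (gramForm (A x)).IsKthNonnull (Finsupp.single · 1) k m)
    (f := fun m x => (√(gramForm (A x) ((gramForm (A x)).gramSchmidt (Finsupp.single · 1) m)
      ((gramForm (A x)).gramSchmidt (Finsupp.single · 1) m)))⁻¹ *
      (gramForm (A x)).gramSchmidt (Finsupp.single · 1) m i) (fun m => ?_) measurable_const
    fun m => ?_
  · exact (measurable_gramForm_gramSchmidt_single_self hA m).sqrt.inv.mul
      (measurable_gramSchmidt_single_apply hA m i)
  · exact (hnonnull m).inter
      (measurableSet_singleton k |>.preimage (measurable_nat_count hnonnull m))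

end Measurability

theorem stmt17_general {K : Type*} [MeasurableSpace K] (p : ℕ)
    (Z : ℕ → ℕ → K → ℝ)
    (hmeas : ∀ i j, Measurable (Z i j))
    (hsymm : ∀ (x : K) (i j : ℕ), Z i j x = Z j i x)
    (hpsd : ∀ (x : K) (N : ℕ), (Matrix.of fun i j : Fin N => Z i j x).PosSemidef)
    (hrank : ∀ (x : K) (N : ℕ), (Matrix.of fun i j : Fin N => Z i j x).rank ≤ p) :
    ∃ g : Fin p → K → (ℕ →₀ ℝ),
      (∀ (k : Fin p) (i : ℕ), Measurable fun x => g k x i) ∧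
      (∀ (x : K) (k l : Fin p), k ≠ l → innerZ Z x (g k x) (g l x) = 0) ∧
      (∀ (x : K) (k : Fin p),
        innerZ Z x (g k x) (g k x) =
          if (k : ℕ) <
              sSup {n : ℕ | ∃ N : ℕ, n = (Matrix.of fun i j : Fin N => Z i j x).rank}
          then 1 else 0) := by
  refine ⟨fun k x => (gramForm fun i j => Z i j x).gramSchmidtNormed (Finsupp.single · 1) k,
    fun k => measurable_gramSchmidtNormed_single_apply hmeas k, fun x k l hkl => ?_,
    fun x k => ?_⟩
  · rw [innerZ_eq_gramForm]
    exact gramSchmidtNormed_orthogonal (gramForm_isSymm (hsymm x))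
      (gramForm_self_nonneg (hpsd x)) _ (Fin.val_ne_of_ne hkl)
  · classical
    have hbdd : BddAbove {n | ∃ N, n = (Matrix.of fun i j : Fin N => Z i j x).rank} :=
      ⟨p, by rintro _ ⟨N, rfl⟩; exact hrank x N⟩
    rw [innerZ_eq_gramForm, gramSchmidtNormed_self (gramForm_self_nonneg (hpsd x))]
    refine if_congr ?_ rfl rfl
    rw [lt_csSup_iff' hbdd]
    simp [rank_gramMatrix_eq_gramSchmidtRank (A := fun i j => Z i j x) (hsymm x) (hpsd x)]

/-- Lemma 3.6 of the paper (pointwise form): a measurable field of positive semidefinite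
infinite Gram matrices with pointwise rank `p(x) ≤ p` admits a measurable field
`g^{(1)}, …, g^{(p)}` of finitely supported sequences that is orthonormal for
`⟨·,·⟩_{Z(x)}` up to the pointwise index `p(x)` and vanishes (in `Z(x)`-seminorm) beyond it. -/
theorem stmt17 {K : Type*} [MeasurableSpace K] (p : ℕ) (hp : 1 ≤ p)
    (Z : ℕ → ℕ → K → ℝ)
    (hmeas : ∀ i j, Measurable (Z i j))
    (hsymm : ∀ (x : K) (i j : ℕ), Z i j x = Z j i x)
    (hpsd : ∀ (x : K) (N : ℕ), (Matrix.of fun i j : Fin N => Z i j x).PosSemidef)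
    (hrank : ∀ (x : K) (N : ℕ), (Matrix.of fun i j : Fin N => Z i j x).rank ≤ p) :
    ∃ g : Fin p → K → (ℕ →₀ ℝ),
      (∀ (k : Fin p) (i : ℕ), Measurable fun x => g k x i) ∧
      (∀ (x : K) (k l : Fin p), k ≠ l → innerZ Z x (g k x) (g l x) = 0) ∧
      (∀ (x : K) (k : Fin p),
        innerZ Z x (g k x) (g k x) =
          if (k : ℕ) <
              sSup {n : ℕ | ∃ N : ℕ, n = (Matrix.of fun i j : Fin N => Z i j x).rank}
          then 1 else 0) :=
  stmt17_general p Z hmeas hsymm hpsd hrank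
end

section
/- Fix a real number r with 0 < r < 1, and define the 3×3 real matrices P = [[1,0,−1],[0,1,−1],[0,0,0]], A₁ = [[0, 1−r², r²],[0, 1, 0],[1, 0, 0]], and A₂ = [[0, 1−r², r²],[0, 1−r², r²],[0, 0, 1]]. Then: (i) P·A᷀ᵢ·P = P·Aᵢ for i = 1, 2; (ii) rank(P·A₁) = 2 and rank(P·A₂) = 1; and (iii) for every m ≥ 1 and every word w = w₁w₂⋯w_m ∈ {1,2}^m that is not the constant word 11⋯1, one has rank(P·A_{w_m}·A_{w_{m−1}}·⋯·A_{w_1}) ≤ 1. -/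
/-- The projection `P` annihilating constants, written in the basis `(c, 0, 1)` of `V₀` for
Hata's tree-like set. -/
noncomputable def Pmat : Matrix (Fin 3) (Fin 3) ℝ := !![1, 0, -1; 0, 1, -1; 0, 0, 0]

/-- The matrices `A₁`, `A₂` representing pullbacks of harmonic functions by the two
contraction maps of Hata's tree-like set, for harmonic structure parameter `r`. -/
noncomputable def Amat (r : ℝ) : Fin 2 → Matrix (Fin 3) (Fin 3) ℝ := fun i =>
  if i = 0 then !![0, 1 - r ^ 2, r ^ 2; 0, 1, 0; 1, 0, 0]
  else !![0, 1 - r ^ 2, r ^ 2; 0, 1 - r ^ 2, r ^ 2; 0, 0, 1]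

lemma PA_proj (r : ℝ) (i : Fin 2) : Pmat * Amat r i * Pmat = Pmat * Amat r i := by
  fin_cases i <;>
    · ext a b
      fin_cases a <;> fin_cases b <;>
        simp [Pmat, Amat, Matrix.mul_apply, Fin.sum_univ_succ, Matrix.vecHead,
          Matrix.vecTail] <;> ring

lemma prod_key (r : ℝ) (L : List (Fin 2)) (hL : L ≠ []) :
    Pmat * (L.map (Amat r)).prod = (L.map (fun i => Pmat * Amat r i)).prod := by
  induction L with
  | nil => exact absurd rfl hL
  | cons a t ih =>
    rcases eq_or_ne t [] with rfl | ht
    · simp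
    · have h := PA_proj r a
      calc Pmat * ((a :: t).map (Amat r)).prod
          = (Pmat * Amat r a * Pmat) * (t.map (Amat r)).prod := by
            rw [h]; simp [Matrix.mul_assoc]
        _ = (Pmat * Amat r a) * (Pmat * (t.map (Amat r)).prod) := by
            simp [Matrix.mul_assoc]
        _ = ((a :: t).map (fun i => Pmat * Amat r i)).prod := by
            rw [ih ht]; simp

lemma rank_le_of_factor {k : ℕ} (M : Matrix (Fin 3) (Fin 3) ℝ)
    (B : Matrix (Fin 3) (Fin k) ℝ) (C : Matrix (Fin k) (Fin 3) ℝ) (h : M = B * C) :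
    M.rank ≤ k := by
  rw [h]
  exact le_trans (Matrix.rank_mul_le_left B C)
    (le_trans (Matrix.rank_le_card_width B) (by simp))

lemma rank_ge_of_unit {k : ℕ} (M : Matrix (Fin 3) (Fin 3) ℝ)
    (G : Matrix (Fin k) (Fin 3) ℝ) (H : Matrix (Fin 3) (Fin k) ℝ) (h : G * M * H = 1) :
    k ≤ M.rank := by
  have h1 : (1 : Matrix (Fin k) (Fin k) ℝ).rank = k := by rw [Matrix.rank_one]; simp
  calc k = (G * M * H).rank := by rw [h, h1]
    _ ≤ (G * M).rank := Matrix.rank_mul_le_left _ _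
    _ ≤ M.rank := Matrix.rank_mul_le_right _ _

/-- The matrix computations in the proof of Proposition 4.6 of the paper:
(i) `P·Aᵢ·P = P·Aᵢ`; (ii) `rank(P·A₁) = 2` and `rank(P·A₂) = 1`; (iii) for every nonempty word
`w = w₁⋯w_m ∈ {1,2}^m` other than `11⋯1`, `rank(P·A_{w_m}·⋯·A_{w_1}) ≤ 1`. -/
theorem stmt18 (r : ℝ) (hr0 : 0 < r) (hr1 : r < 1) :
    (∀ i : Fin 2, Pmat * Amat r i * Pmat = Pmat * Amat r i) ∧
    (Pmat * Amat r 0).rank = 2 ∧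
    (Pmat * Amat r 1).rank = 1 ∧
    (∀ w : List (Fin 2), w ≠ [] → w ≠ List.replicate w.length 0 →
      (Pmat * (w.reverse.map (Amat r)).prod).rank ≤ 1) := by
  have hr2 : r ^ 2 ≠ 0 := pow_ne_zero 2 hr0.ne'
  have hr1' : (1 : ℝ) - r ^ 2 ≠ 0 := by nlinarith
  have hPA1 : Pmat * Amat r 0 = !![-1, 1 - r ^ 2, r ^ 2; -1, 1, 0; 0, 0, 0] := by
    ext a b
    fin_cases a <;> fin_cases b <;>
      simp [Pmat, Amat, Matrix.mul_apply, Fin.sum_univ_succ, Matrix.vecHead,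
        Matrix.vecTail] <;> ring
  have hPA2 : Pmat * Amat r 1 =
      !![0, 1 - r ^ 2, r ^ 2 - 1; 0, 1 - r ^ 2, r ^ 2 - 1; 0, 0, 0] := by
    ext a b
    fin_cases a <;> fin_cases b <;>
      simp [Pmat, Amat, Matrix.mul_apply, Fin.sum_univ_succ, Matrix.vecHead,
        Matrix.vecTail] <;> ring
  have rank1 : (Pmat * Amat r 0).rank = 2 := by
    have hle : (Pmat * Amat r 0).rank ≤ 2 := by
      apply rank_le_of_factor _ !![(1 : ℝ), 0; 0, 1; 0, 0] !![-1, 1 - r ^ 2, r ^ 2; -1, 1, 0]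
      rw [hPA1]; ext a b
      fin_cases a <;> fin_cases b <;>
        simp [Matrix.mul_apply, Fin.sum_univ_succ, Matrix.vecHead, Matrix.vecTail]
    have hge : 2 ≤ (Pmat * Amat r 0).rank := by
      apply rank_ge_of_unit _ !![-1/r^2, (1 - r^2)/r^2, 0; -1/r^2, 1/r^2, 0]
        !![(1 : ℝ), 0; 0, 1; 0, 0]
      rw [hPA1]; ext a b
      fin_cases a <;> fin_cases b <;>
        · simp [Matrix.mul_apply, Fin.sum_univ_succ, Matrix.vecHead, Matrix.vecTail,
            Matrix.one_apply]
          field_simp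
          try ring
    omega
  have rank2le : (Pmat * Amat r 1).rank ≤ 1 := by
    apply rank_le_of_factor _ !![(1 : ℝ); 1; 0] !![0, 1 - r ^ 2, r ^ 2 - 1]
    rw [hPA2]; ext a b
    fin_cases a <;> fin_cases b <;>
      simp [Matrix.mul_apply, Fin.sum_univ_succ, Matrix.vecHead, Matrix.vecTail]
  have rank2 : (Pmat * Amat r 1).rank = 1 := by
    have hge : 1 ≤ (Pmat * Amat r 1).rank := by
      apply rank_ge_of_unit _ !![1/(1-r^2), 0, 0] !![(0 : ℝ); 1; 0]
      rw [hPA2]; ext a b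
      fin_cases a <;> fin_cases b <;>
        · simp [Matrix.mul_apply, Fin.sum_univ_succ, Matrix.vecHead, Matrix.vecTail,
            Matrix.one_apply]
          field_simp
    omega
  refine ⟨PA_proj r, rank1, rank2, ?_⟩
  intro w hw hrep
  have hmem : (1 : Fin 2) ∈ w.reverse := by
    rw [List.mem_reverse]
    by_contra h
    apply hrep
    rw [List.eq_replicate_iff]
    refine ⟨rfl, fun b hb => ?_⟩
    by_contra hb0
    have : b = 1 := by omega
    exact h (this ▸ hb)
  obtain ⟨s, t, hst⟩ := List.append_of_mem hmem
  have hrev : w.reverse ≠ [] := by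
    simp only [ne_eq, List.reverse_eq_nil_iff]; exact hw
  rw [prod_key r _ hrev, hst]
  rw [List.map_append, List.prod_append, List.map_cons, List.prod_cons]
  calc ((s.map (fun i => Pmat * Amat r i)).prod *
        ((Pmat * Amat r 1) * (t.map (fun i => Pmat * Amat r i)).prod)).rank
      ≤ ((Pmat * Amat r 1) * (t.map (fun i => Pmat * Amat r i)).prod).rank :=
        Matrix.rank_mul_le_right _ _
    _ ≤ (Pmat * Amat r 1).rank := Matrix.rank_mul_le_left _ _
    _ = 1 := rank2
end
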